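/- Let f(n) := ∑_{k=1}^{n} τ(2^k − 1). Then the sequence (f(2n)/f(n))_{n≥1} is unbounded, i.e., limsup_{n→∞} f(2n)/f(n) = ∞. -/

import Mathlib

/-- `τ(n)`: the number of positive divisors of `n`. -/
def tau (n : ℕ) : ℕ := n.divisors.card

/-- `f(n) = ∑_{k=1}^{n} τ(2^k - 1)`. -/
def f (n : ℕ) : ℕ := ∑ k ∈ Finset.Icc 1 n, tau (2 ^ k - 1)

open Finset


lemma dvd_two_pow_sub_one_iff (q k : ℕ) :
    q ∣ 2 ^ k - 1 ↔ orderOf (2 : ZMod q) ∣ k := by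
  have h1 : (1:ℕ) ≤ 2 ^ k := Nat.one_le_two_pow
  rw [← ZMod.natCast_eq_zero_iff, Nat.cast_sub h1]
  push_cast
  rw [sub_eq_zero, orderOf_dvd_iff_pow_eq_one]


lemma order_pos {q : ℕ} (hq : q.Prime) (hq2 : q ≠ 2) : 0 < orderOf (2 : ZMod q) := by
  haveI : Fact q.Prime := ⟨hq⟩
  have h2 : (2 : ZMod q) ≠ 0 := by
    intro h
    have := (ZMod.natCast_eq_zero_iff 2 q).mp (by exact_mod_cast h)
    rcases (Nat.prime_dvd_prime_iff_eq hq Nat.prime_two).mp this with rfl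
    exact hq2 rfl
  have := ZMod.pow_card_sub_one_eq_one h2
  exact (isOfFinOrder_iff_pow_eq_one.mpr ⟨q - 1, by have := hq.two_le; omega, this⟩).orderOf_pos

lemma two_mul_add_one_lt : ∀ t : ℕ, 5 ≤ t → 2*t+2 < 2^t := by
  intro t ht
  induction t with
  | zero => omega
  | succ n ih =>
    rcases Nat.lt_or_ge n 5 with h | h
    · have hn : n = 4 := by omega
      subst hn; norm_num
    · have h2 : 2*n+2 < 2^n := ih h
      rw [pow_succ]; omega

lemma exists_primitive {d : ℕ} (hd : 17 ≤ d)
    (hsum : 2 * ∑ e ∈ d.properDivisors, e < d) :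
    ∃ q, q.Prime ∧ q ≠ 2 ∧ orderOf (2 : ZMod q) = d := by
  by_contra hcon
  push_neg at hcon
  set M := 2 ^ d - 1 with hM
  have hd0 : 0 < d := by omega
  have h2d : 2 ^ 17 ≤ 2 ^ d := Nat.pow_le_pow_right (by norm_num) hd
  have hM0 : M ≠ 0 := by have : (2:ℕ)^17 = 131072 := by norm_num
                         omega
  set L := ∏ e ∈ d.properDivisors, (2 ^ e - 1) with hL
  have hL0 : L ≠ 0 := by
    rw [hL]
    apply Finset.prod_ne_zero_iff.mpr
    intro e he
    have : 0 < e := Nat.pos_of_mem_properDivisors he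
    have : 2 ^ 1 ≤ 2 ^ e := Nat.pow_le_pow_right (by norm_num) this
    omega
  -- key valuation bound
  have key : ∀ q ∈ M.primeFactors, M.factorization q ≤ L.factorization q + d.factorization q := by
    intro q hqmem
    have hq : q.Prime := Nat.prime_of_mem_primeFactors hqmem
    have hqM : q ∣ M := Nat.dvd_of_mem_primeFactors hqmem
    have hModd : ¬ 2 ∣ M := by
      intro h2M
      have : (2:ℕ) ∣ 2^d := dvd_pow_self 2 (by omega)
      omega
    have hq2 : q ≠ 2 := by rintro rfl; exact hModd hqM
    have hqodd : Odd q := hq.odd_of_ne_two hq2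
    haveI : Fact q.Prime := ⟨hq⟩
    set e := orderOf (2 : ZMod q) with he
    have hed : e ∣ d := (dvd_two_pow_sub_one_iff q d).mp hqM
    have hene : e ≠ d := fun h => hcon q hq hq2 (by rw [← he, h])
    have hqe : q ∣ 2 ^ e - 1 := (dvd_two_pow_sub_one_iff q e).mpr dvd_rfl
    have he0 : 0 < e := order_pos hq hq2
    have heprop : e ∈ d.properDivisors :=
      Nat.mem_properDivisors.mpr ⟨hed, lt_of_le_of_ne (Nat.le_of_dvd hd0 hed) hene⟩
    -- LTE
    have hx : ¬ q ∣ 2 ^ e := by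
      intro h
      exact hq2 ((Nat.prime_dvd_prime_iff_eq hq Nat.prime_two).mp (hq.dvd_of_dvd_pow h))
    have hyx : (1:ℕ) < 2 ^ e := by
      have : 2 ^ 1 ≤ 2 ^ e := Nat.pow_le_pow_right (by norm_num) he0
      omega
    have hn0 : d / e ≠ 0 := by
      have := Nat.div_pos (Nat.le_of_dvd hd0 hed) he0
      omega
    have hlte := padicValNat.pow_sub_pow hqodd hyx hqe hx hn0
    have hrw : (2 ^ e) ^ (d / e) - 1 ^ (d / e) = M := by
      rw [one_pow, ← pow_mul, Nat.mul_div_cancel' hed]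
    rw [hrw] at hlte
    have hfM : M.factorization q = padicValNat q M := Nat.factorization_def M hq
    have h1 : (2^e - 1).factorization q ≤ L.factorization q := by
      apply (Nat.factorization_le_iff_dvd (by omega) hL0).mpr
        (Finset.dvd_prod_of_mem _ heprop) q
    have h2 : (d / e).factorization q ≤ d.factorization q := by
      apply (Nat.factorization_le_iff_dvd (by omega) (by omega)).mpr
        (Nat.div_dvd_of_dvd hed) q
    rw [hfM, hlte]
    rw [Nat.factorization_def _ hq] at h1
    rw [Nat.factorization_def _ hq] at h2
    omega
  -- M divides L * d
  have hdvd : M ∣ L * d := by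
    rw [← Nat.factorization_le_iff_dvd hM0 (by positivity)]
    rw [Finsupp.le_iff]
    intro q hq
    rw [Nat.support_factorization] at hq
    rw [Nat.factorization_mul hL0 (by omega)]
    exact key q hq
  have hMle : M ≤ L * d := Nat.le_of_dvd (by positivity) hdvd
  -- numeric contradiction
  have hLle : L ≤ 2 ^ (∑ e ∈ d.properDivisors, e) := by
    rw [hL, ← Finset.prod_pow_eq_pow_sum]
    exact Finset.prod_le_prod' fun e _ => Nat.sub_le _ _
  have htd : 2*((d-1)/2)+2 < 2^((d-1)/2) := two_mul_add_one_lt _ (by omega)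
  have hpowle : (2:ℕ) ^ (∑ e ∈ d.properDivisors, e) ≤ 2 ^ ((d-1)/2) :=
    Nat.pow_le_pow_right (by norm_num) (by omega)
  have hfin : L * d < 2 ^ (d - 1) := by
    calc L * d ≤ 2 ^ ((d-1)/2) * d := Nat.mul_le_mul_right d (le_trans hLle hpowle)
      _ < 2 ^ ((d-1)/2) * 2 ^ ((d-1)/2) := by
          apply mul_lt_mul_of_pos_left (by omega) (by positivity)
      _ = 2 ^ ((d-1)/2 + (d-1)/2) := by rw [pow_add]
      _ ≤ 2 ^ (d - 1) := Nat.pow_le_pow_right (by norm_num) (by omega)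
  have h2d1 : 2 ^ (d-1) ≤ M := by
    have h : 2 ^ (d - 1) * 2 = 2 ^ d := by
      rw [← pow_succ]
      congr 1
      omega
    omega
  omega


lemma card_divisors_prod_primes {p : ℕ → ℕ} :
    ∀ (S : Finset ℕ), (∀ i ∈ S, (p i).Prime) →
    (∀ i ∈ S, ∀ j ∈ S, p i = p j → i = j) →
    (∏ i ∈ S, p i).divisors.card = 2 ^ S.card := by
  intro S
  induction S using Finset.induction with
  | empty => simp
  | insert _ _ hnotmem =>
    rename_i a S ih
    intro hp hinj
    have hpa : (p a).Prime := hp a (mem_insert_self a S)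
    have hcop : (p a).Coprime (∏ i ∈ S, p i) := by
      rw [Nat.Prime.coprime_iff_not_dvd hpa]
      intro hdvd
      obtain ⟨i, hi, hdvd'⟩ := hpa.prime.exists_mem_finset_dvd hdvd
      have : p a = p i := ((Nat.prime_dvd_prime_iff_eq hpa (hp i (mem_insert_of_mem hi))).mp hdvd')
      have : a = i := hinj a (mem_insert_self a S) i (mem_insert_of_mem hi) this
      exact hnotmem (this ▸ hi)
    rw [Finset.prod_insert hnotmem, Nat.Coprime.card_divisors_mul hcop,
      Nat.Prime.divisors hpa]
    rw [ih (fun i hi => hp i (mem_insert_of_mem hi))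
      (fun i hi j hj h => hinj i (mem_insert_of_mem hi) j (mem_insert_of_mem hj) h)]
    rw [Finset.card_insert_of_notMem hnotmem, Finset.card_pair hpa.one_lt.ne]
    ring


lemma two_pow_omega_le_tau {m : ℕ} (hm : m ≠ 0) :
    2 ^ m.primeFactors.card ≤ tau m := by
  rw [tau, Nat.card_divisors hm]
  rw [← Finset.prod_const]
  apply Finset.prod_le_prod'
  intro q hq
  have : m.factorization q ≠ 0 := by
    rwa [← Finsupp.mem_support_iff, Nat.support_factorization]
  omega

lemma card_properDivisors {n : ℕ} (hn : n ≠ 0) :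
    n.properDivisors.card = n.divisors.card - 1 := by
  rw [← Nat.insert_self_properDivisors hn,
    Finset.card_insert_of_notMem Nat.self_notMem_properDivisors]
  omega


lemma tau_lower (r : ℕ) (hr : 4 ≤ r) :
    ∃ n0 : ℕ, 1 ≤ n0 ∧ n0 ≤ 2 ^ (2*r*(r+1)) ∧ 2 ^ (2^r - 1) ≤ tau (2 ^ n0 - 1) := by
  -- choose primes
  have hex : ∀ i : ℕ, ∃ q, q.Prime ∧ 2^(r+1+i) < q ∧ q ≤ 2^(r+2+i) := by
    intro i
    obtain ⟨q, hq, h1, h2⟩ := Nat.exists_prime_lt_and_le_two_mul (2^(r+1+i)) (by positivity)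
    refine ⟨q, hq, h1, ?_⟩
    calc q ≤ 2 * 2^(r+1+i) := h2
      _ = 2^(r+2+i) := by ring
  set p : ℕ → ℕ := fun i => (hex i).choose with hp
  have hprime : ∀ i, (p i).Prime := fun i => (hex i).choose_spec.1
  have hlb : ∀ i, 2^(r+1+i) < p i := fun i => (hex i).choose_spec.2.1
  have hub : ∀ i, p i ≤ 2^(r+2+i) := fun i => (hex i).choose_spec.2.2
  have hmono : ∀ i j : ℕ, i < j → p i < p j := by
    intro i j hij
    calc p i ≤ 2^(r+2+i) := hub i
      _ ≤ 2^(r+1+j) := Nat.pow_le_pow_right (by norm_num) (by omega)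
      _ < p j := hlb j
  have hinj : ∀ i j : ℕ, p i = p j → i = j := by
    intro i j h
    rcases lt_trichotomy i j with hlt | he | hgt
    · exact absurd h (hmono i j hlt).ne
    · exact he
    · exact absurd h.symm (hmono j i hgt).ne
  -- the products
  set D : Finset ℕ → ℕ := fun S => ∏ i ∈ S, p i with hD
  have hDinj : ∀ S T : Finset ℕ, D S = D T → S = T := by
    intro S T h
    have key : ∀ (A B : Finset ℕ), D A = D B → A ⊆ B := by
      intro A B hAB i hi
      have h1 : p i ∣ D B := hAB ▸ Finset.dvd_prod_of_mem p hi
      obtain ⟨j, hj, hdvd⟩ := (hprime i).prime.exists_mem_finset_dvd h1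
      have : p i = p j := (Nat.prime_dvd_prime_iff_eq (hprime i) (hprime j)).mp hdvd
      exact (hinj i j this) ▸ hj
    exact Finset.Subset.antisymm (key S T h) (key T S h.symm)
  have hD0 : ∀ S : Finset ℕ, 0 < D S :=
    fun S => Finset.prod_pos fun i _ => (hprime i).pos
  have hDdiv : ∀ S : Finset ℕ, (D S).divisors.card = 2 ^ S.card :=
    fun S => card_divisors_prod_primes S (fun i _ => hprime i) (fun i _ j _ h => hinj i j h)
  -- primitive prime for each nonempty subset of range r
  have hprim : ∀ S : Finset ℕ, S ⊆ range r → S.Nonempty →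
      ∃ q, q.Prime ∧ q ≠ 2 ∧ orderOf (2 : ZMod q) = D S := by
    intro S hSsub hSne
    apply exists_primitive
    · -- 17 ≤ D S
      obtain ⟨i, hi⟩ := hSne
      have h1 : p i ∣ D S := Finset.dvd_prod_of_mem p hi
      have h2 : p i ≤ D S := Nat.le_of_dvd (hD0 S) h1
      have h3 : 2^5 ≤ 2^(r+1+i) := Nat.pow_le_pow_right (by norm_num) (by omega)
      have := hlb i
      norm_num at h3
      omega
    · -- sum of proper divisors small
      have hcard : (D S).properDivisors.card = 2 ^ S.card - 1 := by
        rw [card_properDivisors (hD0 S).ne', hDdiv S]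
      have hbound : ∀ e ∈ (D S).properDivisors, 2^(r+1) * e < D S := by
        intro e he
        obtain ⟨hdvd, hlt⟩ := Nat.mem_properDivisors.mp he
        obtain ⟨c, hc⟩ := hdvd
        have hc1 : c ≠ 1 := by rintro rfl; omega
        have hc0 : c ≠ 0 := by rintro rfl; rw [mul_zero] at hc; exact (hD0 S).ne' hc
        obtain ⟨q, hq, hqc⟩ := Nat.exists_prime_and_dvd hc1
        have hqD : q ∣ D S := hc ▸ Dvd.dvd.mul_left hqc e
        obtain ⟨j, hj, hdvd'⟩ := hq.prime.exists_mem_finset_dvd hqD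
        have hqj : q = p j := (Nat.prime_dvd_prime_iff_eq hq (hprime j)).mp hdvd'
        have h2q : 2^(r+1) < q := by
          have := hlb j
          have : (2:ℕ)^(r+1) ≤ 2^(r+1+j) := Nat.pow_le_pow_right (by norm_num) (by omega)
          omega
        have hqlec : q ≤ c := Nat.le_of_dvd (by omega) hqc
        have he0 : 0 < e := Nat.pos_of_mem_properDivisors he
        calc 2^(r+1) * e < q * e := by
              apply Nat.mul_lt_mul_of_lt_of_le h2q (le_refl e) he0
          _ ≤ c * e := Nat.mul_le_mul_right e hqlec
          _ = D S := by rw [hc]; ring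
      have hsum1 : 2^(r+1) * (∑ e ∈ (D S).properDivisors, e) ≤ (2^r - 1) * D S := by
        rw [Finset.mul_sum]
        calc ∑ e ∈ (D S).properDivisors, 2^(r+1) * e
            ≤ ∑ _e ∈ (D S).properDivisors, D S :=
              Finset.sum_le_sum fun e he => (hbound e he).le
          _ = (2 ^ S.card - 1) * D S := by rw [Finset.sum_const, hcard, smul_eq_mul]
          _ ≤ (2^r - 1) * D S := by
              apply Nat.mul_le_mul_right
              have : S.card ≤ r := by
                have := Finset.card_le_card hSsub
                simpa using this
              have := Nat.pow_le_pow_right (by norm_num : 1 ≤ 2) this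
              omega
      -- conclude 2 * sum < D S
      have hfin : 2^(r+1) * (2 * ∑ e ∈ (D S).properDivisors, e) < 2^(r+1) * D S := by
        calc 2^(r+1) * (2 * ∑ e ∈ (D S).properDivisors, e)
            = 2 * (2^(r+1) * ∑ e ∈ (D S).properDivisors, e) := by ring
          _ ≤ 2 * ((2^r - 1) * D S) := by omega
          _ < 2^(r+1) * D S := by
              have h1 : 2 * (2^r - 1) < 2^(r+1) := by
                have : (2:ℕ)^(r+1) = 2 * 2^r := by ring
                have h2 : 0 < (2:ℕ)^r := by positivity
                omega
              have := hD0 S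
              calc 2 * ((2^r - 1) * D S) = (2 * (2^r - 1)) * D S := by ring
                _ < 2^(r+1) * D S := by
                    apply Nat.mul_lt_mul_of_lt_of_le h1 (le_refl _) (hD0 S)
      exact Nat.lt_of_mul_lt_mul_left hfin
  -- choose the primes qS
  classical
  have hQex : ∀ S : Finset ℕ, ∃ q : ℕ,
      S ∈ ((range r).powerset.erase ∅) →
      q.Prime ∧ q ≠ 2 ∧ orderOf (2 : ZMod q) = D S := by
    intro S
    by_cases h : S ∈ (range r).powerset.erase ∅
    · have hsub : S ⊆ range r := Finset.mem_powerset.mp (Finset.mem_of_mem_erase h)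
      have hne : S.Nonempty := Finset.nonempty_of_ne_empty (Finset.ne_of_mem_erase h)
      obtain ⟨q, hq⟩ := hprim S hsub hne
      exact ⟨q, fun _ => hq⟩
    · exact ⟨0, fun hh => absurd hh h⟩
  choose Q hQ using hQex
  -- n0
  set n0 := D (range r) with hn0
  have hn0pos : 1 ≤ n0 := hD0 (range r)
  have hM0 : 2 ^ n0 - 1 ≠ 0 := by
    have : 2^1 ≤ 2^n0 := Nat.pow_le_pow_right (by norm_num) hn0pos
    omega
  have hmaps : ∀ S ∈ (range r).powerset.erase ∅, Q S ∈ (2 ^ n0 - 1).primeFactors := by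
    intro S hS
    obtain ⟨hq, hq2, hord⟩ := hQ S hS
    have hsub : S ⊆ range r := Finset.mem_powerset.mp (Finset.mem_of_mem_erase hS)
    have hdvdn0 : D S ∣ n0 := Finset.prod_dvd_prod_of_subset _ _ _ hsub
    have : Q S ∣ 2 ^ n0 - 1 := by
      rw [dvd_two_pow_sub_one_iff, hord]
      exact hdvdn0
    exact Nat.mem_primeFactors.mpr ⟨hq, this, hM0⟩
  have hQinj : ∀ S ∈ (range r).powerset.erase ∅, ∀ T ∈ (range r).powerset.erase ∅,
      Q S = Q T → S = T := by
    intro S hS T hT hQeq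
    obtain ⟨_, _, hordS⟩ := hQ S hS
    obtain ⟨_, _, hordT⟩ := hQ T hT
    apply hDinj
    rw [← hordS, ← hordT, hQeq]
  have hcardle : ((range r).powerset.erase ∅).card ≤ (2 ^ n0 - 1).primeFactors.card :=
    Finset.card_le_card_of_injOn Q hmaps hQinj
  have hcardeq : ((range r).powerset.erase ∅).card = 2^r - 1 := by
    rw [Finset.card_erase_of_mem (Finset.empty_mem_powerset _), Finset.card_powerset,
      Finset.card_range]
  refine ⟨n0, hn0pos, ?_, ?_⟩
  · -- n0 ≤ 2^(2r(r+1))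
    calc n0 ≤ ∏ _i ∈ range r, 2^(2*r+1) := by
          apply Finset.prod_le_prod'
          intro i hi
          calc p i ≤ 2^(r+2+i) := hub i
            _ ≤ 2^(2*r+1) := Nat.pow_le_pow_right (by norm_num)
                (by have := Finset.mem_range.mp hi; omega)
      _ = 2^((2*r+1)*r) := by rw [Finset.prod_const, Finset.card_range, ← pow_mul]
      _ ≤ 2^(2*r*(r+1)) := Nat.pow_le_pow_right (by norm_num) (by ring_nf; omega)
  · calc 2^(2^r - 1) = 2^((range r).powerset.erase ∅).card := by rw [hcardeq]
      _ ≤ 2^((2 ^ n0 - 1).primeFactors.card) := Nat.pow_le_pow_right (by norm_num) hcardle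
      _ ≤ tau (2 ^ n0 - 1) := two_pow_omega_le_tau hM0


lemma numeric : ∀ K : ℕ, 1 ≤ K → 288*K^3 + 24*K^2 + 2 ≤ 2^(12*K) := by
  intro K hK
  induction K with
  | zero => omega
  | succ n ih =>
    rcases Nat.eq_or_lt_of_le hK with h | h
    · have hn0 : n = 0 := by omega
      subst hn0; norm_num
    · have hn : 1 ≤ n := by omega
      have h1 := ih hn
      have h2 : (n+1)^3 ≤ 8 * n^3 := by
        calc (n+1)^3 ≤ (2*n)^3 := Nat.pow_le_pow_left (by omega) 3
          _ = 8 * n^3 := by ring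
      have h3 : (n+1)^2 ≤ 8 * n^2 := by
        calc (n+1)^2 ≤ (2*n)^2 := Nat.pow_le_pow_left (by omega) 2
          _ ≤ 8 * n^2 := by nlinarith
      have h4 : (2:ℕ)^(12*(n+1)) = 2^(12*n) * 4096 := by
        rw [show 12*(n+1) = 12*n + 12 by ring, pow_add]
        norm_num
      calc 288*(n+1)^3 + 24*(n+1)^2 + 2 ≤ 8*(288*n^3 + 24*n^2 + 2) := by omega
        _ ≤ 8 * 2^(12*n) := by omega
        _ ≤ 2^(12*n) * 4096 := by omega
        _ = 2^(12*(n+1)) := h4.symm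

lemma f_one : f 1 = 1 := by rw [f, Finset.Icc_self, Finset.sum_singleton]; decide

lemma f_two : f 2 = 3 := by rw [f, Finset.sum_Icc_succ_top (by norm_num), Finset.Icc_self, Finset.sum_singleton]; decide

lemma tau_le_f {n0 N : ℕ} (h1 : 1 ≤ n0) (h2 : n0 ≤ N) : tau (2 ^ n0 - 1) ≤ f N := by
  unfold f
  apply Finset.single_le_sum (f := fun k => tau (2 ^ k - 1)) (fun i _ => Nat.zero_le _)
  exact Finset.mem_Icc.mpr ⟨h1, h2⟩

lemma f_pos {n : ℕ} (h : 1 ≤ n) : 0 < f n := by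
  have : tau (2 ^ 1 - 1) ≤ f n := tau_le_f le_rfl h
  have : tau (2^1 - 1) = 1 := by decide
  omega

/-- The sequence `(f(2n)/f(n))_{n ≥ 1}` is unbounded. -/
theorem f_ratio_unbounded :
    ∀ C : ℝ, ∃ n : ℕ, 1 ≤ n ∧ C < (f (2 * n) : ℝ) / (f n : ℝ) := by
  intro C
  by_contra hcon
  push_neg at hcon
  -- basic consequences
  have hstep : ∀ n : ℕ, 1 ≤ n → (f (2 * n) : ℝ) ≤ C * f n := by
    intro n hn
    have h := hcon n hn
    have hfn : (0:ℝ) < f n := by exact_mod_cast f_pos hn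
    rw [div_le_iff₀ hfn] at h
    linarith
  have hC3 : (3:ℝ) ≤ C := by
    have h := hstep 1 le_rfl
    rw [show 2 * 1 = 2 by norm_num, f_two, f_one] at h
    push_cast at h
    linarith
  have hC0 : (0:ℝ) ≤ C := by linarith
  have hpow : ∀ m : ℕ, (f (2 ^ m) : ℝ) ≤ C ^ m := by
    intro m
    induction m with
    | zero => simp [f_one]
    | succ k ih =>
      have h1 : 1 ≤ 2 ^ k := Nat.one_le_two_pow
      have h2 := hstep (2 ^ k) h1
      have : (f (2 ^ (k+1)) : ℝ) ≤ C * f (2 ^ k) := by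
        rw [pow_succ, mul_comm (2^k) 2] at *
        exact h2
      calc (f (2 ^ (k+1)) : ℝ) ≤ C * f (2 ^ k) := this
        _ ≤ C * C ^ k := by
            apply mul_le_mul_of_nonneg_left ih hC0
        _ = C ^ (k+1) := by ring
  -- choose K and r
  set K := ⌈C⌉₊ + 2 with hK
  have hCK : C ≤ K := by
    have := Nat.le_ceil C
    rw [hK]; push_cast
    linarith
  have hK2 : 2 ≤ K := by omega
  set r := 12 * K with hr
  have hr4 : 4 ≤ r := by omega
  set m := 2 * r * (r + 1) with hm
  obtain ⟨n0, hn01, hn0le, htau⟩ := tau_lower r hr4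
  -- lower bound on f (2^m)
  have hfm : 2 ^ (2 ^ r - 1) ≤ f (2 ^ m) := le_trans htau (tau_le_f hn01 hn0le)
  -- upper bound
  have hup : (f (2 ^ m) : ℝ) ≤ (K : ℝ) ^ m :=
    le_trans (hpow m) (pow_le_pow_left₀ hC0 hCK m)
  have hnat : (2:ℕ) ^ (2 ^ r - 1) ≤ K ^ m := by
    have h1 : ((2:ℕ) ^ (2 ^ r - 1) : ℝ) ≤ (K:ℝ) ^ m := by
      calc ((2:ℕ) ^ (2 ^ r - 1) : ℝ) ≤ (f (2 ^ m) : ℝ) := by exact_mod_cast hfm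
        _ ≤ (K:ℝ) ^ m := hup
    exact_mod_cast h1
  -- but K^m < 2^(2^r - 1)
  have hKm : K ^ m ≤ 2 ^ (K * m) := by
    calc K ^ m ≤ (2 ^ K) ^ m := Nat.pow_le_pow_left (Nat.lt_two_pow_self (n := K)).le m
      _ = 2 ^ (K * m) := by rw [← pow_mul]
  have hKmval : K * m = 288 * K^3 + 24 * K^2 := by
    rw [hm, hr]; ring
  have hnum := numeric K (by omega)
  have hfinal : K ^ m < 2 ^ (2 ^ r - 1) := by
    have h2 : K * m < 2 ^ r - 1 := by
      have : (2:ℕ)^(12*K) = 2 ^ r := by rw [hr]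
      omega
    calc K ^ m ≤ 2 ^ (K * m) := hKm
      _ < 2 ^ (2 ^ r - 1) := Nat.pow_lt_pow_right (by norm_num) h2
  omega
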